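/- arXiv:1707.03087 — 3 statements merged into one kernel-verified Lean document; each statement's English description precedes it below -/
import Mathlib

section
/- Let p, q > 1 be real numbers with 1/p + 1/q = 1. Then the function t ↦ ∫₀^∞ dx / (x^(1/p) · (1 + (x+t)²)^(1/q)) is bounded on ℝ; explicitly, for all t ∈ ℝ, ∫₀^∞ dx / (x^(1/p) (1 + (x+t)²)^(1/q)) ≤ 2p²/((2p-1)(p-1)) + (2/(q+1)) ∫_{-∞}^∞ dx / (1+x²)^((q+1)/(2q)). -/
/-!
Split the integral at `x = 1`. On `(0, 1]` drop the factor `(1 + (x + t)²)^(-1/q) ≤ 1` and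
integrate `x^(-1/p)`. On `(1, ∞)` apply weighted AM-GM with weights `(q-1)/(q+1)` and `2/(q+1)`,
chosen so that `x^(-1/p) (1 + (x + t)²)^(-1/q)` is bounded by a combination of
`x^(-(q+1)/q)` and `(1 + (x + t)²)^(-(q+1)/(2q))`: both exponents exceed the integrability
thresholds, the first integral is explicit and the second is a translate of an integral over `ℝ`.
-/

open MeasureTheory Set

lemma lintegral_Ioc_zero_one_one_div_rpow {a : ℝ} (ha : a < 1) :
    ∫⁻ x in Ioc (0:ℝ) 1, ENNReal.ofReal (1 / x ^ a) = ENNReal.ofReal (1 / (1 - a)) := by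
  have ha' : -1 < -a := by linarith
  have hrpow : EqOn (fun x : ℝ ↦ ENNReal.ofReal (1 / x ^ a))
      (fun x ↦ ENNReal.ofReal (x ^ (-a))) (Ioc 0 1) := fun x hx ↦ by
    simp [Real.rpow_neg hx.1.le]
  rw [setLIntegral_congr_fun measurableSet_Ioc hrpow, ← ofReal_integral_eq_lintegral_ofReal
    (intervalIntegral.intervalIntegrable_rpow' ha').1
    ((ae_restrict_iff' measurableSet_Ioc).2 (.of_forall fun x hx ↦ Real.rpow_nonneg hx.1.le _)),
    ← intervalIntegral.integral_of_le zero_le_one, integral_rpow (.inl ha')]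
  have : 1 - a ≠ 0 := by linarith
  simp [neg_add_eq_sub, Real.zero_rpow this]

lemma lintegral_Ioi_one_one_div_rpow {a : ℝ} (ha : 1 < a) :
    ∫⁻ x in Ioi (1:ℝ), ENNReal.ofReal (1 / x ^ a) = ENNReal.ofReal (1 / (a - 1)) := by
  have ha' : -a < -1 := by linarith
  have hrpow : EqOn (fun x : ℝ ↦ ENNReal.ofReal (1 / x ^ a))
      (fun x ↦ ENNReal.ofReal (x ^ (-a))) (Ioi 1) := fun x hx ↦ by
    simp [Real.rpow_neg (zero_le_one.trans hx.le)]
  rw [setLIntegral_congr_fun measurableSet_Ioi hrpow, ← ofReal_integral_eq_lintegral_ofReal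
    (integrableOn_Ioi_rpow_of_lt ha' one_pos)
    ((ae_restrict_iff' measurableSet_Ioi).2
      (.of_forall fun x hx ↦ Real.rpow_nonneg (zero_le_one.trans (le_of_lt hx)) _)),
    integral_Ioi_rpow_of_lt ha' one_pos, Real.one_rpow, neg_div, ← div_neg, neg_add, neg_neg,
    ← sub_eq_add_neg]

lemma lintegral_Ioc_zero_one_one_div_rpow_mul_le {a : ℝ} (ha : a < 1) {g : ℝ → ℝ}
    (hg : ∀ x ∈ Ioc (0:ℝ) 1, 1 ≤ g x) :
    ∫⁻ x in Ioc (0:ℝ) 1, ENNReal.ofReal (1 / (x ^ a * g x)) ≤ ENNReal.ofReal (1 / (1 - a)) := by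
  rw [← lintegral_Ioc_zero_one_one_div_rpow ha]
  refine setLIntegral_mono' measurableSet_Ioc fun x hx ↦ ENNReal.ofReal_le_ofReal ?_
  have hxa : 0 < x ^ a := Real.rpow_pos_of_pos hx.1 a
  exact one_div_le_one_div_of_le hxa (le_mul_of_one_le_right hxa.le (hg x hx))

lemma one_div_rpow_mul_rpow_le {p q : ℝ} (hpq : p.HolderConjugate q) {x y : ℝ} (hx : 0 ≤ x)
    (hy : 0 ≤ y) :
    1 / (x ^ (1 / p) * y ^ (1 / q)) ≤
      (q - 1) / (q + 1) * (1 / x ^ ((q + 1) / q)) + 2 / (q + 1) * (1 / y ^ ((q + 1) / (2 * q))) := by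
  have hq := hpq.symm.lt
  have one_div_rpow_rpow {z : ℝ} (hz : 0 ≤ z) (a b : ℝ) : (1 / z ^ a) ^ b = 1 / z ^ (a * b) := by
    rw [Real.div_rpow zero_le_one (Real.rpow_nonneg hz _), Real.one_rpow, Real.rpow_mul hz]
  have hx' : (1 / x ^ ((q + 1) / q)) ^ ((q - 1) / (q + 1)) = 1 / x ^ (1 / p) := by
    rw [one_div_rpow_rpow hx, one_div p, ← hpq.symm.one_sub_inv]
    congr 2
    field_simp
  have hy' : (1 / y ^ ((q + 1) / (2 * q))) ^ (2 / (q + 1)) = 1 / y ^ (1 / q) := by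
    rw [one_div_rpow_rpow hy]
    congr 2
    field_simp
  rw [← one_div_mul_one_div, ← hx', ← hy']
  refine Real.geom_mean_le_arith_mean2_weighted (div_nonneg (by linarith) (by linarith))
    (by positivity) (by positivity) (by positivity) ?_
  field_simp
  ring

lemma lintegral_Ioi_one_one_div_rpow_mul_rpow_le {p q : ℝ} (hpq : p.HolderConjugate q) (t : ℝ) :
    ∫⁻ x in Ioi (1:ℝ), ENNReal.ofReal (1 / (x ^ (1/p) * (1 + (x + t)^2) ^ (1/q))) ≤
      ENNReal.ofReal ((q - 1) / (q + 1) * q) +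
        ENNReal.ofReal (2 / (q + 1)) *
          ∫⁻ x : ℝ, ENNReal.ofReal (1 / (1 + x^2) ^ ((q + 1) / (2*q))) := by
  have hq := hpq.symm.lt
  set c := (q + 1) / (2 * q)
  calc _ ≤ ∫⁻ x in Ioi (1:ℝ), (ENNReal.ofReal ((q - 1) / (q + 1)) *
          ENNReal.ofReal (1 / x ^ ((q + 1) / q)) +
        ENNReal.ofReal (2 / (q + 1)) * ENNReal.ofReal (1 / (1 + (x + t)^2) ^ c)) := by
        refine setLIntegral_mono' measurableSet_Ioi fun x hx ↦ ?_
        have hx0 : 0 ≤ x := zero_le_one.trans hx.le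
        rw [← ENNReal.ofReal_mul (div_nonneg (by linarith) (by linarith)),
          ← ENNReal.ofReal_mul (by positivity), ← ENNReal.ofReal_add
            (mul_nonneg (div_nonneg (by linarith) (by linarith))
              (one_div_nonneg.2 (Real.rpow_nonneg hx0 _))) (by positivity)]
        exact ENNReal.ofReal_le_ofReal (one_div_rpow_mul_rpow_le hpq hx0 (by positivity))
    _ = ENNReal.ofReal ((q - 1) / (q + 1)) * ENNReal.ofReal q +
        ENNReal.ofReal (2 / (q + 1)) *
          ∫⁻ x in Ioi (1:ℝ), ENNReal.ofReal (1 / (1 + (x + t)^2) ^ c) := by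
        rw [lintegral_add_left (by fun_prop), lintegral_const_mul' _ _ ENNReal.ofReal_ne_top,
          lintegral_const_mul' _ _ ENNReal.ofReal_ne_top,
          lintegral_Ioi_one_one_div_rpow (by rw [lt_div_iff₀ (by linarith)]; linarith)]
        congr 3
        field_simp
        ring
    _ ≤ _ := by
        rw [← ENNReal.ofReal_mul (div_nonneg (by linarith) (by linarith))]
        gcongr _ + _ * ?_
        exact (setLIntegral_le_lintegral _ _).trans_eq
          (lintegral_add_right_eq_self (fun x ↦ ENNReal.ofReal (1 / (1 + x^2) ^ c)) t)

theorem stmt0_general (p q : ℝ) (hp : 1 < p) (hpq : 1/p + 1/q = 1) (t : ℝ) :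
    ∫⁻ x in Ioi (0:ℝ), ENNReal.ofReal (1 / (x ^ (1/p) * (1 + (x + t)^2) ^ (1/q))) ≤
      ENNReal.ofReal (2 * p^2 / ((2*p - 1) * (p - 1))) +
        ENNReal.ofReal (2 / (q + 1)) *
          ∫⁻ x : ℝ, ENNReal.ofReal (1 / (1 + x^2) ^ ((q + 1) / (2*q))) := by
  have hconj : p.HolderConjugate q :=
    Real.holderConjugate_iff.2 ⟨hp, by simpa only [one_div] using hpq⟩
  have hq := hconj.symm.lt
  have hconst : q + (q - 1) / (q + 1) * q = 2 * p^2 / ((2*p - 1) * (p - 1)) := by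
    field_simp
    rw [eq_div_iff (by nlinarith)]
    linear_combination (4 * p * q + 2 * p - 2 * q) * hconj.mul_eq_add
  have hnear : ∫⁻ x in Ioc (0:ℝ) 1, ENNReal.ofReal (1 / (x ^ (1/p) * (1 + (x + t)^2) ^ (1/q))) ≤
      ENNReal.ofReal q := by
    refine (lintegral_Ioc_zero_one_one_div_rpow_mul_le ((div_lt_one (by linarith)).2 hp)
      fun x _ ↦ Real.one_le_rpow (by nlinarith) hconj.symm.one_div_nonneg).trans_eq ?_
    rw [one_div p, hconj.one_sub_inv, one_div, inv_inv]
  calc _ ≤ _ := by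
        rw [← Ioc_union_Ioi_eq_Ioi zero_le_one]
        exact lintegral_union_le _ _ _
    _ ≤ _ := add_le_add hnear (lintegral_Ioi_one_one_div_rpow_mul_rpow_le hconj t)
    _ = _ := by
        rw [← add_assoc, ← ENNReal.ofReal_add (by linarith) (by positivity), hconst]

theorem stmt0 (p q : ℝ) (hp : 1 < p) (hq : 1 < q) (hpq : 1/p + 1/q = 1) (t : ℝ) :
    ∫⁻ x in Ioi (0:ℝ), ENNReal.ofReal (1 / (x ^ (1/p) * (1 + (x + t)^2) ^ (1/q))) ≤
      ENNReal.ofReal (2 * p^2 / ((2*p - 1) * (p - 1))) +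
        ENNReal.ofReal (2 / (q + 1)) *
          ∫⁻ x : ℝ, ENNReal.ofReal (1 / (1 + x^2) ^ ((q + 1) / (2*q))) :=
  stmt0_general p q hp hpq t
end

section
/- Let ε > 0 and ℓ > 0, and let Ω : (0,ε) × [0,2π] → ℝ be a nonnegative measurable function such that for all r ∈ (0,ε), ∫₀^{2π} Ω(r,θ) · r dθ ≥ ℓ. Then ∫₀^ε ∫₀^{2π} Ω(r,θ)² dθ · r dr = ∞. -/
open MeasureTheory Set Real
open scoped ENNReal

/-!
By Cauchy–Schwarz on the circle of radius `r`,
`ℓ² ≤ (∫ Ω r dθ)² ≤ 2π r · (r ∫ Ω² dθ)`, so the integrand `r ∫ Ω² dθ` of the conformal area is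
at least `ℓ² / (2π r)`, which is not integrable at `r = 0`.
-/

theorem ENNReal.sq_ofReal_le_ofReal_sq (x : ℝ) : ENNReal.ofReal x ^ 2 ≤ ENNReal.ofReal (x ^ 2) := by
  rcases le_total 0 x with hx | hx
  · rw [ENNReal.ofReal_pow hx]
  · simp [ENNReal.ofReal_of_nonpos hx]

namespace MeasureTheory

variable {α : Type*} [MeasurableSpace α]

/-- No measurability is needed: `∫⁻` is attained by a measurable minorant, to which Hölder
applies. -/
theorem sq_lintegral_le_measure_univ_mul_lintegral_sq (μ : Measure α) (f : α → ℝ≥0∞) :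
    (∫⁻ a, f a ∂μ) ^ 2 ≤ μ univ * ∫⁻ a, f a ^ 2 ∂μ := by
  obtain ⟨g, hg, hgf, hfg⟩ := exists_measurable_le_lintegral_eq μ f
  have holder := ENNReal.lintegral_mul_le_Lp_mul_Lq μ Real.HolderConjugate.two_two
    hg.aemeasurable (aemeasurable_const (b := (1 : ℝ≥0∞)))
  simp only [Pi.mul_apply, mul_one, ENNReal.one_rpow, lintegral_const, one_mul] at holder
  calc (∫⁻ a, f a ∂μ) ^ 2 = (∫⁻ a, g a ∂μ) ^ 2 := by rw [hfg]
    _ ≤ ((∫⁻ a, g a ^ (2 : ℝ) ∂μ) ^ (1 / 2 : ℝ) * μ univ ^ (1 / 2 : ℝ)) ^ 2 := by gcongr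
    _ = μ univ * ∫⁻ a, g a ^ 2 ∂μ := by
      rw [mul_pow, ← ENNReal.rpow_natCast, ← ENNReal.rpow_mul,
        ← ENNReal.rpow_natCast (μ univ ^ _), ← ENNReal.rpow_mul]
      norm_num [mul_comm]
    _ ≤ μ univ * ∫⁻ a, f a ^ 2 ∂μ := by gcongr with a; exact hgf a

theorem sq_lintegral_ofReal_mul_le (μ : Measure α) (w : α → ℝ) {r : ℝ} (hr : 0 ≤ r) :
    (∫⁻ a, ENNReal.ofReal (w a * r) ∂μ) ^ 2 ≤
      μ univ * ENNReal.ofReal r * ((∫⁻ a, ENNReal.ofReal (w a ^ 2) ∂μ) * ENNReal.ofReal r) := by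
  simp_rw [ENNReal.ofReal_mul' hr]
  rw [lintegral_mul_const' _ _ ENNReal.ofReal_ne_top]
  calc ((∫⁻ a, ENNReal.ofReal (w a) ∂μ) * ENNReal.ofReal r) ^ 2
      ≤ μ univ * (∫⁻ a, ENNReal.ofReal (w a) ^ 2 ∂μ) * ENNReal.ofReal r ^ 2 := by
        rw [mul_pow]
        gcongr
        exact sq_lintegral_le_measure_univ_mul_lintegral_sq μ _
    _ ≤ μ univ * (∫⁻ a, ENNReal.ofReal (w a ^ 2) ∂μ) * ENNReal.ofReal r ^ 2 := by
        gcongr with a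
        exact ENNReal.sq_ofReal_le_ofReal_sq (w a)
    _ = _ := by ring

end MeasureTheory

theorem lintegral_ofReal_inv_Ioo_zero_eq_top {ε : ℝ} (hε : 0 < ε) :
    ∫⁻ r in Ioo 0 ε, ENNReal.ofReal r⁻¹ = ∞ := by
  by_contra h
  have hint : IntegrableOn (fun r : ℝ => r⁻¹) (Ioo 0 ε) := by
    refine (lintegral_ofReal_ne_top_iff_integrable measurable_inv.aestronglyMeasurable ?_).1 h
    filter_upwards [ae_restrict_mem measurableSet_Ioo] with r hr
    exact inv_nonneg.2 hr.1.le
  simpa [hε.ne] using (intervalIntegrable_iff_integrableOn_Ioo_of_le hε.le).2 hint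

theorem setLIntegral_Ioo_zero_eq_top_of_le_mul {ε : ℝ} (hε : 0 < ε) {c : ℝ≥0∞} (hc : c ≠ 0)
    {g : ℝ → ℝ≥0∞} (hg : ∀ r ∈ Ioo 0 ε, c ≤ ENNReal.ofReal r * g r) :
    ∫⁻ r in Ioo 0 ε, g r = ∞ := by
  have hbound : ∀ r ∈ Ioo 0 ε, c * ENNReal.ofReal r⁻¹ ≤ g r := fun r hr => calc
    c * ENNReal.ofReal r⁻¹ ≤ ENNReal.ofReal r * g r * ENNReal.ofReal r⁻¹ := by
        gcongr
        exact hg r hr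
    _ = g r := by
      rw [mul_comm, ← mul_assoc, ← ENNReal.ofReal_mul (inv_nonneg.2 hr.1.le),
        inv_mul_cancel₀ hr.1.ne', ENNReal.ofReal_one, one_mul]
  refine top_le_iff.1 ?_
  calc ∞ = c * ∫⁻ r in Ioo 0 ε, ENNReal.ofReal r⁻¹ := by
        rw [lintegral_ofReal_inv_Ioo_zero_eq_top hε, ENNReal.mul_top hc]
    _ ≤ ∫⁻ r in Ioo 0 ε, c * ENNReal.ofReal r⁻¹ := lintegral_const_mul_le _ _
    _ ≤ ∫⁻ r in Ioo 0 ε, g r := setLIntegral_mono' measurableSet_Ioo hbound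

theorem stmt6_general (ε ℓ : ℝ) (hε : 0 < ε) (hℓ : 0 < ℓ)
    (Ω : ℝ → ℝ → ℝ)
    (hlen : ∀ r ∈ Ioo 0 ε,
      ENNReal.ofReal ℓ ≤ ∫⁻ θ in Ioc (0:ℝ) (2*π), ENNReal.ofReal (Ω r θ * r)) :
    ∫⁻ r in Ioo 0 ε,
        (∫⁻ θ in Ioc (0:ℝ) (2*π), ENNReal.ofReal ((Ω r θ)^2)) * ENNReal.ofReal r = ⊤ := by
  have hcircle : volume.restrict (Ioc (0:ℝ) (2*π)) univ = ENNReal.ofReal (2*π) := by simp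
  refine setLIntegral_Ioo_zero_eq_top_of_le_mul hε
    (c := ENNReal.ofReal ℓ ^ 2 / ENNReal.ofReal (2*π)) (by simp [hℓ, ENNReal.mul_eq_top])
    fun r hr => ENNReal.div_le_of_le_mul' ?_
  calc ENNReal.ofReal ℓ ^ 2 ≤ (∫⁻ θ in Ioc (0:ℝ) (2*π), ENNReal.ofReal (Ω r θ * r)) ^ 2 := by
        gcongr
        exact hlen r hr
    _ ≤ _ := sq_lintegral_ofReal_mul_le _ (Ω r) hr.1.le
    _ = _ := by rw [hcircle, mul_assoc]

theorem stmt6 (ε ℓ : ℝ) (hε : 0 < ε) (hℓ : 0 < ℓ)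
    (Ω : ℝ → ℝ → ℝ) (hmeas : Measurable (Function.uncurry Ω))
    (hnonneg : ∀ r θ, 0 ≤ Ω r θ)
    (hlen : ∀ r ∈ Ioo 0 ε,
      ENNReal.ofReal ℓ ≤ ∫⁻ θ in Ioc (0:ℝ) (2*π), ENNReal.ofReal (Ω r θ * r)) :
    ∫⁻ r in Ioo 0 ε,
        (∫⁻ θ in Ioc (0:ℝ) (2*π), ENNReal.ofReal ((Ω r θ)^2)) * ENNReal.ofReal r = ⊤ :=
  stmt6_general ε ℓ hε hℓ Ω hlen
end

section
/- Let m ≥ 1 be an integer and s > m real. There is a constant B > 0 depending only on m and s such that for every t ∈ ℝ, ∫₀^∞ dρ / (ρ^((m-1)/(s-1)) · (1 + (ρ+t)²)^((s-m)/(s-1))) ≤ B. -/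
/-!
Write `a = (m-1)/(s-1)` and `b = (s-m)/(s-1)`, so that `0 ≤ a < 1` and `a + 2b > 1`; hence
`F x = 1 / (x^a (1+x²)^b)` is integrable on `(0, ∞)` (like `x^(-a)` near `0`, like
`x^(-(a+2b))` near `∞`). With `u = |ρ + t|` the integrand is `1 / (ρ^a (1+u²)^b)`, which is at
most `F ρ` when `ρ ≤ u` and at most `F u` otherwise. Integrating `F ρ + F |ρ + t|` over `ρ > 0`
gives at most `∫ F + ∫_ℝ F |x| = 3 ∫ F`, independently of `t`.
-/

open MeasureTheory Set

lemma lintegral_comp_abs_le {F : ℝ → ENNReal} (hF : Measurable F) :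
    ∫⁻ x, F |x| ≤ 2 * ∫⁻ x in Ioi 0, F x := by
  have habs_le : ∀ x, F |x| ≤ (Ici 0).indicator F x + (Ici 0).indicator F (-x) := by
    intro x
    rcases le_total 0 x with hx | hx
    · rw [abs_of_nonneg hx, indicator_of_mem (mem_Ici.2 hx)]
      exact le_self_add
    · rw [abs_of_nonpos hx, indicator_of_mem (mem_Ici.2 (neg_nonneg.2 hx))]
      exact le_add_self
  calc ∫⁻ x, F |x| ≤ ∫⁻ x, ((Ici 0).indicator F x + (Ici 0).indicator F (-x)) :=
        lintegral_mono habs_le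
    _ = 2 * ∫⁻ x in Ici 0, F x := by
      rw [lintegral_add_left (hF.indicator measurableSet_Ici), lintegral_neg_eq_self,
        lintegral_indicator measurableSet_Ici, two_mul]
    _ = 2 * ∫⁻ x in Ioi 0, F x := by rw [setLIntegral_congr Ioi_ae_eq_Ici]

section

variable {a b : ℝ}

lemma integrableOn_Ioc_one_div_rpow_mul_one_add_sq_rpow (ha : a < 1) (hb : 0 ≤ b) :
    IntegrableOn (fun x : ℝ => 1 / (x ^ a * (1 + x ^ 2) ^ b)) (Ioc 0 1) := by
  have hdom : IntegrableOn (fun x : ℝ => x ^ (-a)) (Ioc 0 1) :=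
    (intervalIntegrable_iff_integrableOn_Ioc_of_le zero_le_one).1
      (intervalIntegral.intervalIntegrable_rpow' (by linarith))
  refine hdom.mono' (by fun_prop : Measurable _).aestronglyMeasurable
    (ae_restrict_of_forall_mem measurableSet_Ioc fun x hx => ?_)
  have hx : 0 < x := hx.1
  rw [Real.norm_of_nonneg (by positivity), Real.rpow_neg hx.le, ← one_div]
  exact one_div_le_one_div_of_le (by positivity)
    (le_mul_of_one_le_right (by positivity) (Real.one_le_rpow (by nlinarith) hb))

lemma integrableOn_Ioi_one_div_rpow_mul_one_add_sq_rpow (hb : 0 ≤ b) (hab : 1 < a + 2 * b) :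
    IntegrableOn (fun x : ℝ => 1 / (x ^ a * (1 + x ^ 2) ^ b)) (Ioi 1) := by
  refine (integrableOn_Ioi_rpow_of_lt (by linarith : -(a + 2 * b) < -1) one_pos).mono'
    (by fun_prop : Measurable _).aestronglyMeasurable
    (ae_restrict_of_forall_mem measurableSet_Ioi fun x (hx : 1 < x) => ?_)
  have hx0 : 0 < x := one_pos.trans hx
  have hsq : x ^ (2 * b) ≤ (1 + x ^ 2) ^ b := by
    rw [Real.rpow_mul hx0.le, Real.rpow_two]
    exact Real.rpow_le_rpow (by positivity) (by linarith) hb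
  rw [Real.norm_of_nonneg (by positivity), Real.rpow_neg hx0.le, ← one_div,
    Real.rpow_add hx0]
  exact one_div_le_one_div_of_le (by positivity)
    (mul_le_mul_of_nonneg_left hsq (by positivity))

lemma integrableOn_Ioi_zero_one_div_rpow_mul_one_add_sq_rpow (ha : a < 1) (hb : 0 ≤ b)
    (hab : 1 < a + 2 * b) :
    IntegrableOn (fun x : ℝ => 1 / (x ^ a * (1 + x ^ 2) ^ b)) (Ioi 0) := by
  rw [← Ioc_union_Ioi_eq_Ioi zero_le_one]
  exact (integrableOn_Ioc_one_div_rpow_mul_one_add_sq_rpow ha hb).union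
    (integrableOn_Ioi_one_div_rpow_mul_one_add_sq_rpow hb hab)

lemma one_div_rpow_mul_one_add_sq_rpow_le_add (ha : 0 ≤ a) (hb : 0 ≤ b) {x y : ℝ}
    (hx : 0 < x) (hy : 0 < y) :
    1 / (x ^ a * (1 + y ^ 2) ^ b) ≤
      1 / (x ^ a * (1 + x ^ 2) ^ b) + 1 / (y ^ a * (1 + y ^ 2) ^ b) := by
  rcases le_total x y with hxy | hyx
  · refine le_add_of_le_of_nonneg (one_div_le_one_div_of_le (by positivity) ?_) (by positivity)
    gcongr
  · refine le_add_of_nonneg_of_le (by positivity) (one_div_le_one_div_of_le (by positivity) ?_)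
    gcongr

lemma lintegral_Ioi_one_div_rpow_mul_one_add_sq_rpow_le (ha : 0 ≤ a) (hb : 0 ≤ b) (t : ℝ) :
    ∫⁻ ρ in Ioi 0, ENNReal.ofReal (1 / (ρ ^ a * (1 + (ρ + t) ^ 2) ^ b)) ≤
      3 * ∫⁻ x in Ioi 0, ENNReal.ofReal (1 / (x ^ a * (1 + x ^ 2) ^ b)) := by
  set F : ℝ → ENNReal := fun x => ENNReal.ofReal (1 / (x ^ a * (1 + x ^ 2) ^ b))
  have hF : Measurable F := by fun_prop
  have hpointwise : ∀ᵐ ρ ∂volume.restrict (Ioi 0),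
      ENNReal.ofReal (1 / (ρ ^ a * (1 + (ρ + t) ^ 2) ^ b)) ≤ F ρ + F |ρ + t| := by
    -- at `ρ = -t` the bound can fail, its last term being the junk value `1 / 0 = 0`
    filter_upwards [ae_restrict_mem measurableSet_Ioi,
      ae_restrict_of_ae (Measure.ae_ne volume (-t))] with ρ (hρ : 0 < ρ) hρt
    rw [← sq_abs (ρ + t)]
    refine (ENNReal.ofReal_le_ofReal ?_).trans ENNReal.ofReal_add_le
    exact one_div_rpow_mul_one_add_sq_rpow_le_add ha hb hρ
      (abs_pos.2 fun h => hρt (eq_neg_of_add_eq_zero_left h))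
  calc ∫⁻ ρ in Ioi 0, ENNReal.ofReal (1 / (ρ ^ a * (1 + (ρ + t) ^ 2) ^ b))
      ≤ ∫⁻ ρ in Ioi 0, (F ρ + F |ρ + t|) := lintegral_mono_ae hpointwise
    _ ≤ (∫⁻ x in Ioi 0, F x) + ∫⁻ ρ, F |ρ + t| := by
      rw [lintegral_add_left hF]
      exact add_le_add_right (setLIntegral_le_lintegral _ _) _
    _ ≤ (∫⁻ x in Ioi 0, F x) + 2 * ∫⁻ x in Ioi 0, F x := by
      rw [lintegral_add_right_eq_self (fun x => F |x|) t]
      gcongr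
      exact lintegral_comp_abs_le hF
    _ = 3 * ∫⁻ x in Ioi 0, F x := by ring

end

theorem stmt10 (m : ℕ) (hm : 1 ≤ m) (s : ℝ) (hs : (m : ℝ) < s) :
    ∃ B : ℝ, 0 < B ∧ ∀ t : ℝ,
      ∫⁻ ρ in Ioi (0:ℝ), ENNReal.ofReal
          (1 / (ρ ^ ((m - 1 : ℝ)/(s - 1)) * (1 + (ρ + t)^2) ^ ((s - m)/(s - 1)))) ≤
        ENNReal.ofReal B := by
  have hm1 : (1 : ℝ) ≤ m := by exact_mod_cast hm
  have hs1 : 0 < s - 1 := by linarith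
  set a : ℝ := (m - 1) / (s - 1)
  set b : ℝ := (s - m) / (s - 1)
  have ha0 : 0 ≤ a := div_nonneg (by linarith) hs1.le
  have ha1 : a < 1 := (div_lt_one hs1).2 (by linarith)
  have hb : 0 ≤ b := div_nonneg (by linarith) hs1.le
  have hab : 1 < a + 2 * b := by
    rw [show a + 2 * b = (m - 1 + 2 * (s - m)) / (s - 1) by ring, one_lt_div hs1]
    linarith
  set J := ∫⁻ x in Ioi 0, ENNReal.ofReal (1 / (x ^ a * (1 + x ^ 2) ^ b))
  have hJ : 3 * J ≠ ⊤ := ENNReal.mul_ne_top ENNReal.ofNat_ne_top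
    (integrableOn_Ioi_zero_one_div_rpow_mul_one_add_sq_rpow ha1 hb hab).lintegral_lt_top.ne
  refine ⟨(3 * J).toReal + 1, by positivity, fun t => ?_⟩
  calc _ ≤ 3 * J := lintegral_Ioi_one_div_rpow_mul_one_add_sq_rpow_le ha0 hb t
    _ = ENNReal.ofReal (3 * J).toReal := (ENNReal.ofReal_toReal hJ).symm
    _ ≤ ENNReal.ofReal ((3 * J).toReal + 1) := ENNReal.ofReal_le_ofReal (by linarith)
end
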